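/- For n ≥ 1, the function U_n(t) = ∫₀ᵗ dt₁ ⋯ ∫_{t_{n−1}}ᵗ dt_n ∏_{k=1}^{n+1} cosh²(c(t_k − t_{k−1})) (t₀=0, t_{n+1}=t) satisfies the third-order difference-differential equation U_n''' (t) = U_{n−1}''(t) + 4c² U_n'(t) − 2c² U_{n−1}(t), with U₀(t) = cosh²(ct). -/

import Mathlib

open Real MeasureTheory

/-- Iterated simplex integral with `s₀ = a`, `s_{n+1} = t`. -/
noncomputable def iterInt (f : ℝ → ℝ) : ℕ → ℝ → ℝ → ℝ
  | 0, a, t => f (t - a)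
  | n+1, a, t => ∫ s in a..t, f (s - a) * iterInt f n s t

/-- `U_n(t)`: simplex integral of products of squared hyperbolic cosines of
increments, `U_0(t) = cosh²(ct)`. -/
noncomputable def U (c : ℝ) (n : ℕ) (t : ℝ) : ℝ :=
  iterInt (fun u => Real.cosh (c * u) ^ 2) n 0 t

/-!
Write `K(y) = cosh²(cy)`. Translation invariance of the simplex integral gives the convolution
recursion `U_{n+1}(x) = ∫₀ˣ K(x - u) U_n(u) du`. Since `K(y) = 1/2 + (e^{2cy} + e^{-2cy})/4`,
`U_{n+1}` is a combination of the exponential convolutions `E_μ g(x) = ∫₀ˣ e^{μ(x-u)} g(u) du`,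
`μ ∈ {0, ±2c}`, of `g = U_n`, and these satisfy `(E_μ g)' = g + μ E_μ g`. Differentiating three
times, the `E_{±2c}` terms of `U_{n+1}'''` are `4c²` times those of `U_{n+1}'` (this is
`K''' = 4c² K'`), while the boundary values `K(0) = 1`, `K'(0) = 0`, `K''(0) = 2c²` produce the
terms in `U_n''` and `U_n`.
-/

open scoped ContDiff

lemma iterInt_eq_iterInt_zero (f : ℝ → ℝ) (n : ℕ) (a t : ℝ) :
    iterInt f n a t = iterInt f n 0 (t - a) := by
  induction n generalizing a t with
  | zero => simp [iterInt]
  | succ n ih =>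
    have h := intervalIntegral.integral_comp_sub_right (a := a) (b := t)
      (fun s => f (s - 0) * iterInt f n s (t - a)) a
    rw [sub_self] at h
    simp only [iterInt]
    rw [← h]
    congr 1 with s
    rw [sub_zero, ih s t, ih (s - a) (t - a), sub_sub_sub_cancel_right]

lemma iterInt_succ_zero (f : ℝ → ℝ) (n : ℕ) (x : ℝ) :
    iterInt f (n + 1) 0 x = ∫ u in (0 : ℝ)..x, f (x - u) * iterInt f n 0 u := by
  have h := intervalIntegral.integral_comp_sub_left (a := 0) (b := x)
    (fun u => f (x - u) * iterInt f n 0 u) x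
  rw [sub_self, sub_zero] at h
  simp only [iterInt]
  rw [← h]
  congr 1 with s
  rw [sub_zero, sub_sub_cancel, iterInt_eq_iterInt_zero f n s x]

noncomputable def expConv (μ : ℝ) (g : ℝ → ℝ) (x : ℝ) : ℝ :=
  ∫ u in (0 : ℝ)..x, exp (μ * (x - u)) * g u

noncomputable def coshSqConv (c : ℝ) (g : ℝ → ℝ) (x : ℝ) : ℝ :=
  ∫ u in (0 : ℝ)..x, cosh (c * (x - u)) ^ 2 * g u

lemma U_succ (c : ℝ) (n : ℕ) : U c (n + 1) = coshSqConv c (U c n) :=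
  funext fun x => iterInt_succ_zero _ n x

section expConv

variable (μ : ℝ) {g : ℝ → ℝ}

lemma expConv_eq_exp_mul (x : ℝ) :
    expConv μ g x = exp (μ * x) * ∫ u in (0 : ℝ)..x, exp (-(μ * u)) * g u := by
  rw [expConv, ← intervalIntegral.integral_const_mul]
  congr 1 with u
  rw [← mul_assoc, ← exp_add]
  ring_nf

lemma hasDerivAt_expConv (hg : Continuous g) (x : ℝ) :
    HasDerivAt (expConv μ g) (g x + μ * expConv μ g x) x := by
  have hE : HasDerivAt (fun y => exp (μ * y)) (exp (μ * x) * μ) x := by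
    simpa using ((hasDerivAt_id x).const_mul μ).exp
  have hI := ((by fun_prop : Continuous fun u => exp (-(μ * u)) * g u).integral_hasStrictDerivAt
    0 x).hasDerivAt
  have hexp : exp (μ * x) * exp (-(μ * x)) = 1 := by rw [← exp_add, add_neg_cancel, exp_zero]
  rw [funext (expConv_eq_exp_mul μ)]
  refine (hE.fun_mul hI).congr_deriv ?_
  linear_combination g x * hexp

lemma deriv_expConv (hg : Continuous g) :
    deriv (expConv μ g) = fun x => g x + μ * expConv μ g x :=
  funext fun x => (hasDerivAt_expConv μ hg x).deriv

lemma contDiff_expConv (hg : ContDiff ℝ ∞ g) : ContDiff ℝ ∞ (expConv μ g) := by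
  have hdiff : Differentiable ℝ (expConv μ g) := fun x =>
    (hasDerivAt_expConv μ hg.continuous x).differentiableAt
  refine contDiff_infty.2 fun k => ?_
  induction k with
  | zero => exact contDiff_zero.2 hdiff.continuous
  | succ k ih =>
    rw [Nat.cast_succ, contDiff_succ_iff_deriv, deriv_expConv μ hg.continuous]
    exact ⟨hdiff, by simp, (hg.of_le (by exact_mod_cast le_top)).add (contDiff_const.mul ih)⟩

end expConv

lemma cosh_sq_eq_exp (y : ℝ) : cosh y ^ 2 = 1 / 2 + (exp (2 * y) + exp (-(2 * y))) / 4 := by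
  have hexp : exp y * exp (-y) = 1 := by rw [← exp_add, add_neg_cancel, exp_zero]
  rw [cosh_eq, show 2 * y = y + y by ring, show -(y + y) = -y + -y by ring, exp_add, exp_add]
  linear_combination (1 / 2) * hexp

section coshSqConv

variable (c : ℝ) {g : ℝ → ℝ}

lemma coshSqConv_eq_expConv (hg : Continuous g) :
    coshSqConv c g = fun x =>
      1 / 2 * expConv 0 g x + 1 / 4 * (expConv (2 * c) g x + expConv (-(2 * c)) g x) := by
  have hint : ∀ μ x, IntervalIntegrable (fun u => exp (μ * (x - u)) * g u) volume 0 x :=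
    fun μ x => (by fun_prop : Continuous _).intervalIntegrable _ _
  ext x
  rw [expConv, expConv, expConv, ← intervalIntegral.integral_add (hint _ x) (hint _ x),
    ← intervalIntegral.integral_const_mul, ← intervalIntegral.integral_const_mul,
    ← intervalIntegral.integral_add ((hint _ x).const_mul _)
      (((hint _ x).add (hint _ x)).const_mul _)]
  refine intervalIntegral.integral_congr fun u _ => ?_
  rw [cosh_sq_eq_exp, zero_mul, exp_zero, ← mul_assoc, neg_mul]
  ring

lemma deriv_coshSqConv (hg : Continuous g) :
    deriv (coshSqConv c g) = fun x =>
      g x + c / 2 * (expConv (2 * c) g x - expConv (-(2 * c)) g x) := by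
  ext x
  rw [coshSqConv_eq_expConv c hg]
  refine ((((hasDerivAt_expConv 0 hg x).const_mul (1 / 2)).add
    (((hasDerivAt_expConv (2 * c) hg x).add (hasDerivAt_expConv (-(2 * c)) hg x)).const_mul
      (1 / 4)))).deriv.trans ?_
  ring

lemma deriv_deriv_coshSqConv (hg : Differentiable ℝ g) :
    deriv (deriv (coshSqConv c g)) = fun x =>
      deriv g x + c ^ 2 * (expConv (2 * c) g x + expConv (-(2 * c)) g x) := by
  ext x
  rw [deriv_coshSqConv c hg.continuous]
  refine ((hg x).hasDerivAt.add (((hasDerivAt_expConv (2 * c) hg.continuous x).sub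
    (hasDerivAt_expConv (-(2 * c)) hg.continuous x)).const_mul (c / 2))).deriv.trans ?_
  ring

lemma deriv_deriv_deriv_coshSqConv (hg : Differentiable ℝ g) {x : ℝ}
    (hg' : DifferentiableAt ℝ (deriv g) x) :
    deriv (deriv (deriv (coshSqConv c g))) x =
      deriv (deriv g) x + 4 * c ^ 2 * deriv (coshSqConv c g) x - 2 * c ^ 2 * g x := by
  rw [deriv_deriv_coshSqConv c hg, deriv_coshSqConv c hg.continuous]
  refine (hg'.hasDerivAt.add (((hasDerivAt_expConv (2 * c) hg.continuous x).add
    (hasDerivAt_expConv (-(2 * c)) hg.continuous x)).const_mul (c ^ 2))).deriv.trans ?_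
  ring

lemma contDiff_coshSqConv (hg : ContDiff ℝ ∞ g) : ContDiff ℝ ∞ (coshSqConv c g) := by
  rw [coshSqConv_eq_expConv c hg.continuous]
  exact (contDiff_const.mul (contDiff_expConv 0 hg)).add
    (contDiff_const.mul ((contDiff_expConv _ hg).add (contDiff_expConv _ hg)))

end coshSqConv

lemma contDiff_U (c : ℝ) (n : ℕ) : ContDiff ℝ ∞ (U c n) := by
  induction n with
  | zero =>
    have hU0 : U c 0 = fun t => cosh (c * t) ^ 2 := funext fun t => by simp [U, iterInt]
    rw [hU0]
    fun_prop
  | succ n ih => exact U_succ c n ▸ contDiff_coshSqConv c ih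

theorem iterCoshSq_ode_general (c : ℝ) (n : ℕ) (hn : 1 ≤ n) (t : ℝ) :
    deriv (deriv (deriv (U c n))) t
      = deriv (deriv (U c (n - 1))) t + 4 * c^2 * deriv (U c n) t
        - 2 * c^2 * U c (n - 1) t := by
  obtain ⟨m, rfl⟩ := Nat.exists_eq_add_of_le' hn
  have hU := contDiff_U c m
  rw [Nat.add_sub_cancel, U_succ]
  exact deriv_deriv_deriv_coshSqConv c (hU.differentiable (by simp))
    ((contDiff_infty_iff_deriv.1 hU).2.differentiable (by simp) t)

/-- for n ≥ 1, `U_n''' = U_{n-1}'' + 4c² U_n' - 2c² U_{n-1}`. -/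
theorem iterCoshSq_ode (c : ℝ) (hc : 0 < c) (n : ℕ) (hn : 1 ≤ n) (t : ℝ) (ht : 0 < t) :
    deriv (deriv (deriv (U c n))) t
      = deriv (deriv (U c (n - 1))) t + 4 * c^2 * deriv (U c n) t
        - 2 * c^2 * U c (n - 1) t :=
  iterCoshSq_ode_general c n hn t
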